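/- arXiv:2512.06286 — 4 statements merged into one kernel-verified Lean document; each statement's English description precedes it below -/
import Mathlib

section
/- For positive semidefinite matrices A and B of size n, the Bures–Wasserstein distance B(A,B) := sqrt(Tr[A + B - 2(B^{1/2} A B^{1/2})^{1/2}]) equals the minimum over orthogonal matrices U of the Frobenius norm ||A^{1/2} - B^{1/2} U||_F, and the minimizer is the orthogonal factor in the polar decomposition of B^{1/2} A^{1/2}. -/
open Matrix

namespace Matrix.PosSemidef

open scoped ComplexOrder

/-- The old Mathlib (Dec 2024) definition of the square root of a PSD matrix, removed since. -/
noncomputable def sqrt {n 𝕜 : Type*} [Fintype n] [RCLike 𝕜] [DecidableEq n] {A : Matrix n n 𝕜}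
    (hA : PosSemidef A) : Matrix n n 𝕜 :=
  hA.1.eigenvectorUnitary.1 * diagonal ((↑) ∘ (√·) ∘ hA.1.eigenvalues) *
  (star hA.1.eigenvectorUnitary : Matrix n n 𝕜)

lemma posSemidef_sqrt {n 𝕜 : Type*} [Fintype n] [RCLike 𝕜] [DecidableEq n] {A : Matrix n n 𝕜}
    (hA : PosSemidef A) : PosSemidef hA.sqrt := by
  unfold sqrt
  have hD : (diagonal ((↑) ∘ (√·) ∘ hA.1.eigenvalues : n → 𝕜)).PosSemidef := by
    rw [posSemidef_diagonal_iff]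
    intro i
    simp [RCLike.ofReal_nonneg, Real.sqrt_nonneg]
  have := hD.mul_mul_conjTranspose_same (hA.1.eigenvectorUnitary : Matrix n n 𝕜)
  simpa [Matrix.star_eq_conjTranspose] using this

end Matrix.PosSemidef

noncomputable section

/-- Frobenius norm of a real matrix. -/
def frobNorm {p q : ℕ} (A : Matrix (Fin p) (Fin q) ℝ) : ℝ :=
  Real.sqrt (∑ i, ∑ j, (A i j) ^ 2)

/-- `B^{1/2} * A * B^{1/2}` is positive semidefinite when `A`, `B` are. -/
lemma midPosSemidef {n : ℕ} {A B : Matrix (Fin n) (Fin n) ℝ} (hA : A.PosSemidef)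
    (hB : B.PosSemidef) : (hB.sqrt * A * hB.sqrt).PosSemidef := by
  have h := hA.mul_mul_conjTranspose_same hB.sqrt
  rwa [hB.posSemidef_sqrt.isHermitian.eq] at h

/-- Bures–Wasserstein distance
`B(A,B) = sqrt (Tr[A + B - 2 (B^{1/2} A B^{1/2})^{1/2}])`. -/
def bwDist {n : ℕ} {A B : Matrix (Fin n) (Fin n) ℝ}
    (hA : A.PosSemidef) (hB : B.PosSemidef) : ℝ :=
  Real.sqrt ((A + B - (2 : ℝ) • (midPosSemidef hA hB).sqrt).trace)

namespace Matrix.PosSemidef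

open scoped MatrixOrder ComplexOrder

lemma sqrt_eq_cfcSqrt {n 𝕜 : Type*} [Fintype n] [RCLike 𝕜] [DecidableEq n] {A : Matrix n n 𝕜}
    (hA : PosSemidef A) : hA.sqrt = CFC.sqrt A := by
  rw [CFC.sqrt_eq_cfc, cfc_nnreal_eq_real _ A, hA.1.cfc_eq, IsHermitian.cfc, sqrt,
    Unitary.conjStarAlgAut_apply]
  congr 3
  funext i
  simp [Real.coe_toNNReal', hA.eigenvalues_nonneg i]

lemma sqrt_mul_self {n 𝕜 : Type*} [Fintype n] [RCLike 𝕜] [DecidableEq n] {A : Matrix n n 𝕜}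
    (hA : PosSemidef A) : hA.sqrt * hA.sqrt = A := by
  rw [sqrt_eq_cfcSqrt]
  exact CFC.sqrt_mul_sqrt_self A hA.nonneg

lemma eq_sqrt_of_sq_eq {n 𝕜 : Type*} [Fintype n] [RCLike 𝕜] [DecidableEq n] {B A : Matrix n n 𝕜}
    (hB : PosSemidef B) (hA : PosSemidef A) (h : B ^ 2 = A) : B = hA.sqrt := by
  rw [sqrt_eq_cfcSqrt, eq_comm, CFC.sqrt_eq_iff A B hA.nonneg hB.nonneg, ← sq, h]

end Matrix.PosSemidef

open Polynomial Filter

lemma sumMul_eq_trace {n : ℕ} (A B : Matrix (Fin n) (Fin n) ℝ) :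
    ∑ i, ∑ j, A i j * B i j = (Aᵀ * B).trace := by
  rw [Matrix.trace]
  simp only [Matrix.diag, Matrix.mul_apply, Matrix.transpose_apply]
  rw [Finset.sum_comm]

lemma sumSq_eq_trace {n : ℕ} (A : Matrix (Fin n) (Fin n) ℝ) :
    ∑ i, ∑ j, (A i j)^2 = (Aᵀ * A).trace := by
  simp only [sq]; exact sumMul_eq_trace A A

lemma sumSq_nonneg {n : ℕ} (A : Matrix (Fin n) (Fin n) ℝ) :
    0 ≤ ∑ i, ∑ j, (A i j)^2 :=
  Finset.sum_nonneg fun _ _ => Finset.sum_nonneg fun _ _ => sq_nonneg _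

lemma psd_transpose_eq {n : ℕ} {P : Matrix (Fin n) (Fin n) ℝ} (hP : P.PosSemidef) :
    Pᵀ = P := by
  rw [← Matrix.conjTranspose_eq_transpose_of_trivial]; exact hP.isHermitian

lemma trace_orth_mul_psd_le {n : ℕ} {V P : Matrix (Fin n) (Fin n) ℝ}
    (hV : Vᵀ * V = 1) (hP : P.PosSemidef) : (V * P).trace ≤ P.trace := by
  set Q := hP.sqrt with hQ
  have hQt : Qᵀ = Q := psd_transpose_eq hP.posSemidef_sqrt
  have hQQ : Q * Q = P := hP.sqrt_mul_self
  have h1 : (V * P).trace = (Qᵀ * (V * Q)).trace := by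
    rw [hQt, ← hQQ, ← Matrix.mul_assoc, Matrix.trace_mul_comm (V * Q) Q]
  have h3 : ∑ i, ∑ j, ((V * Q) i j)^2 = ∑ i, ∑ j, (Q i j)^2 := by
    rw [sumSq_eq_trace, sumSq_eq_trace, Matrix.transpose_mul, Matrix.mul_assoc,
      ← Matrix.mul_assoc Vᵀ, hV, Matrix.one_mul]
  have hPtr : P.trace = ∑ i, ∑ j, (Q i j)^2 := by
    rw [sumSq_eq_trace, hQt, hQQ]
  rw [h1, ← sumMul_eq_trace, hPtr]
  calc ∑ i, ∑ j, Q i j * (V * Q) i j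
      = ∑ p : Fin n × Fin n, Q p.1 p.2 * (V * Q) p.1 p.2 := by
        rw [Fintype.sum_prod_type]
    _ ≤ Real.sqrt (∑ p : Fin n × Fin n, (Q p.1 p.2)^2) *
        Real.sqrt (∑ p : Fin n × Fin n, ((V * Q) p.1 p.2)^2) :=
        Real.sum_mul_le_sqrt_mul_sqrt _ _ _
    _ = ∑ i, ∑ j, (Q i j)^2 := by
        rw [Fintype.sum_prod_type, Fintype.sum_prod_type]
        simp only [h3]
        rw [Real.mul_self_sqrt (sumSq_nonneg Q)]

lemma polar_of_isUnit {n : ℕ} {N : Matrix (Fin n) (Fin n) ℝ} (h : IsUnit N.det) :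
    ∃ U : Matrix (Fin n) (Fin n) ℝ, Uᵀ * U = 1 ∧ (N * Uᵀ).PosSemidef := by
  have hNNt : (N * Nᵀ).PosSemidef := by
    have := Matrix.posSemidef_self_mul_conjTranspose N
    rwa [Matrix.conjTranspose_eq_transpose_of_trivial] at this
  set P := hNNt.sqrt with hPdef
  have hPt : Pᵀ = P := psd_transpose_eq hNNt.posSemidef_sqrt
  have hPP : P * P = N * Nᵀ := hNNt.sqrt_mul_self
  have hdet : IsUnit P.det := by
    have h2 : IsUnit (P.det * P.det) := by
      rw [← Matrix.det_mul, hPP, Matrix.det_mul, Matrix.det_transpose]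
      exact h.mul h
    exact isUnit_of_mul_isUnit_left h2
  have hPinv : P * P⁻¹ = 1 := Matrix.mul_nonsing_inv P hdet
  have hinvP : P⁻¹ * P = 1 := Matrix.nonsing_inv_mul P hdet
  refine ⟨P⁻¹ * N, ?_, ?_⟩
  · rw [mul_eq_one_comm]
    have hinvt : (P⁻¹ * N)ᵀ = Nᵀ * P⁻¹ := by
      rw [Matrix.transpose_mul, Matrix.transpose_nonsing_inv, hPt]
    rw [hinvt]
    calc P⁻¹ * N * (Nᵀ * P⁻¹) = P⁻¹ * (N * Nᵀ) * P⁻¹ := by rw [Matrix.mul_assoc, Matrix.mul_assoc, Matrix.mul_assoc]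
      _ = P⁻¹ * (P * P) * P⁻¹ := by rw [hPP]
      _ = (P⁻¹ * P) * (P * P⁻¹) := by rw [Matrix.mul_assoc, Matrix.mul_assoc, Matrix.mul_assoc]
      _ = 1 := by rw [hinvP, hPinv, Matrix.one_mul]
  · have hUt : (P⁻¹ * N)ᵀ = Nᵀ * P⁻¹ := by
      rw [Matrix.transpose_mul, Matrix.transpose_nonsing_inv, hPt]
    rw [hUt, ← Matrix.mul_assoc, ← hPP, Matrix.mul_assoc, hPinv, Matrix.mul_one]
    exact hNNt.posSemidef_sqrt


lemma posSemidef_of_tendsto {n : ℕ} {f : ℕ → Matrix (Fin n) (Fin n) ℝ}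
    {L : Matrix (Fin n) (Fin n) ℝ} (hf : ∀ k, (f k).PosSemidef)
    (hL : Tendsto f atTop (nhds L)) : L.PosSemidef := by
  have hent : ∀ i j, Tendsto (fun k => f k i j) atTop (nhds (L i j)) := by
    intro i j
    exact ((continuous_apply j).comp (continuous_apply i)).continuousAt.tendsto.comp hL
  refine posSemidef_iff_dotProduct_mulVec.mpr ⟨?_, ?_⟩
  · ext i j
    have h1 : Tendsto (fun k => f k j i) atTop (nhds (L j i)) := hent j i
    have h2 : (fun k => f k j i) = fun k => f k i j := by
      funext k
      simpa using congrArg (fun M => M i j) (hf k).isHermitian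
    rw [h2] at h1
    have := tendsto_nhds_unique h1 (hent i j)
    simp [Matrix.conjTranspose_apply, this]
  · intro x
    have hc : Continuous fun M : Matrix (Fin n) (Fin n) ℝ => star x ⬝ᵥ M.mulVec x := by
      exact (continuous_const.dotProduct (continuous_id.matrix_mulVec continuous_const))
    have ht : Tendsto (fun k => star x ⬝ᵥ (f k).mulVec x) atTop (nhds (star x ⬝ᵥ L.mulVec x)) :=
      hc.continuousAt.tendsto.comp hL
    exact ge_of_tendsto' ht fun k => (hf k).dotProduct_mulVec_nonneg x

lemma orth_compact {n : ℕ} :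
    IsCompact {U : Matrix (Fin n) (Fin n) ℝ | Uᵀ * U = 1} := by
  have hcl : IsClosed {U : Matrix (Fin n) (Fin n) ℝ | Uᵀ * U = 1} :=
    isClosed_eq (continuous_id.matrix_transpose.matrix_mul continuous_id) continuous_const
  have hbig : IsCompact ((Set.univ : Set (Fin n)).pi fun _ =>
      (Set.univ : Set (Fin n)).pi fun _ => Set.Icc (-1 : ℝ) 1) :=
    isCompact_univ_pi fun _ => isCompact_univ_pi fun _ => isCompact_Icc
  refine hbig.of_isClosed_subset hcl ?_
  intro U hU i _ j _
  have h1 : ∑ k, (U k j)^2 = 1 := by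
    have hU' : (Matrix.of U)ᵀ * Matrix.of U = 1 := hU
    have := congrArg (fun M => M j j) hU'
    simp only [Matrix.mul_apply, Matrix.transpose_apply, Matrix.one_apply_eq, Matrix.of_apply] at this
    simpa [sq] using this
  have h2 : (U i j)^2 ≤ 1 := by
    rw [← h1]
    exact Finset.single_le_sum (f := fun k => (U k j)^2) (fun k _ => sq_nonneg _) (Finset.mem_univ i)
  exact Set.mem_Icc.2 ⟨by nlinarith, by nlinarith⟩

lemma det_perturb {n : ℕ} (M : Matrix (Fin n) (Fin n) ℝ) (t : ℝ) :
    ((-M).charpoly).eval t = (t • (1 : Matrix (Fin n) (Fin n) ℝ) + M).det := by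
  rw [Matrix.charpoly, eval_det, Matrix.matPolyEquiv_charmatrix]
  simp only [eval_sub, eval_X, eval_C, sub_neg_eq_add]
  rw [Matrix.scalar_apply, ← Matrix.smul_one_eq_diagonal]

lemma polar_exists {n : ℕ} (M : Matrix (Fin n) (Fin n) ℝ) :
    ∃ U : Matrix (Fin n) (Fin n) ℝ, Uᵀ * U = 1 ∧ (M * Uᵀ).PosSemidef := by
  have hp : (-M).charpoly ≠ 0 := ((-M).charpoly_monic).ne_zero
  have hroots : {t : ℝ | ((-M).charpoly).IsRoot t}.Finite :=
    Polynomial.finite_setOf_isRoot hp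
  have key : ∀ k : ℕ, ∃ t : ℝ, 0 < t ∧ t < 1/(k+1) ∧ IsUnit (t • (1 : Matrix (Fin n) (Fin n) ℝ) + M).det := by
    intro k
    have hpos : (0:ℝ) < 1/(k+1) := by positivity
    have hinf : (Set.Ioo (0:ℝ) (1/(k+1))).Infinite := Set.Ioo_infinite hpos
    obtain ⟨t, ht⟩ := (hinf.diff hroots).nonempty
    obtain ⟨⟨ht1, ht2⟩, htr⟩ := ht
    refine ⟨t, ht1, ht2, ?_⟩
    rw [isUnit_iff_ne_zero, ← det_perturb]
    exact fun h => htr h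
  choose t ht1 ht2 hunit using key
  choose U hUorth hUpsd using fun k => polar_of_isUnit (hunit k)
  have hmem : ∀ k, U k ∈ {V : Matrix (Fin n) (Fin n) ℝ | Vᵀ * V = 1} := hUorth
  haveI : FirstCountableTopology (Matrix (Fin n) (Fin n) ℝ) :=
    inferInstanceAs (FirstCountableTopology (Fin n → Fin n → ℝ))
  obtain ⟨U₀, hU₀mem, φ, hφ, hUconv⟩ := orth_compact.tendsto_subseq hmem
  have htconv : Tendsto (fun k => t (φ k)) atTop (nhds 0) := by
    apply squeeze_zero (fun k => (ht1 (φ k)).le) (fun k => (ht2 (φ k)).le)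
    exact tendsto_one_div_add_atTop_nhds_zero_nat.comp hφ.tendsto_atTop
  -- limit matrix
  have hNconv : Tendsto (fun k => (t (φ k) • (1 : Matrix (Fin n) (Fin n) ℝ) + M) * (U (φ k))ᵀ)
      atTop (nhds (M * U₀ᵀ)) := by
    have hcont : Continuous fun p : ℝ × Matrix (Fin n) (Fin n) ℝ =>
        (p.1 • (1 : Matrix (Fin n) (Fin n) ℝ) + M) * p.2ᵀ :=
      ((continuous_fst.smul continuous_const).add continuous_const).matrix_mul
        continuous_snd.matrix_transpose
    have := (hcont.continuousAt (x := ((0:ℝ), U₀))).tendsto.comp (htconv.prodMk_nhds hUconv)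
    simp only [zero_smul, zero_add] at this
    exact this
  refine ⟨U₀, hU₀mem, posSemidef_of_tendsto (fun k => ?_) hNconv⟩
  exact hUpsd (φ k)

/-- The Bures–Wasserstein distance between PSD matrices `A` and `B` equals the minimum
over orthogonal matrices `U` of the Frobenius norm `‖A^{1/2} - B^{1/2} U‖_F`, and the
minimum is attained at the orthogonal factor of the polar decomposition of
`B^{1/2} A^{1/2}`. -/
theorem bures_wasserstein_orthogonal_procrustes {n : ℕ}
    {A B : Matrix (Fin n) (Fin n) ℝ} (hA : A.PosSemidef) (hB : B.PosSemidef) :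
    IsLeast {x : ℝ | ∃ U : Matrix (Fin n) (Fin n) ℝ, Uᵀ * U = 1 ∧
        x = frobNorm (hA.sqrt - hB.sqrt * U)} (bwDist hA hB) ∧
    ∃ U₀ : Matrix (Fin n) (Fin n) ℝ, U₀ᵀ * U₀ = 1 ∧
      (∃ P : Matrix (Fin n) (Fin n) ℝ, P.PosSemidef ∧ hB.sqrt * hA.sqrt = P * U₀) ∧
      frobNorm (hA.sqrt - hB.sqrt * U₀) = bwDist hA hB := by
  obtain ⟨U₀, hU₀, hPpsd⟩ := polar_exists (hB.sqrt * hA.sqrt)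
  set X := hA.sqrt with hXdef
  set Y := hB.sqrt with hYdef
  set M := Y * X with hMdef
  set P := M * U₀ᵀ with hPdef
  have hXt : Xᵀ = X := psd_transpose_eq hA.posSemidef_sqrt
  have hYt : Yᵀ = Y := psd_transpose_eq hB.posSemidef_sqrt
  have hXX : X * X = A := hA.sqrt_mul_self
  have hYY : Y * Y = B := hB.sqrt_mul_self
  have hU₀U₀t : U₀ * U₀ᵀ = 1 := mul_eq_one_comm.mp hU₀
  have hPt : Pᵀ = P := psd_transpose_eq hPpsd
  have hMP : M = P * U₀ := by
    rw [hPdef, Matrix.mul_assoc, hU₀, Matrix.mul_one]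
  have hPsq : P ^ 2 = Y * A * Y := by
    have h1 : P * Pᵀ = M * Mᵀ := by
      rw [hPdef, Matrix.transpose_mul, Matrix.transpose_transpose, Matrix.mul_assoc,
        ← Matrix.mul_assoc U₀ᵀ, hU₀, Matrix.one_mul]
    rw [sq]
    nth_rewrite 2 [← hPt]
    rw [h1, hMdef, Matrix.transpose_mul, hXt, hYt, ← hXX]
    rw [Matrix.mul_assoc, Matrix.mul_assoc, Matrix.mul_assoc]
  have hPsqrt : P = (midPosSemidef hA hB).sqrt :=
    hPpsd.eq_sqrt_of_sq_eq (midPosSemidef hA hB) hPsq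
  -- expansion of Frobenius norm squared
  have expand : ∀ U : Matrix (Fin n) (Fin n) ℝ, Uᵀ * U = 1 →
      ∑ i, ∑ j, ((X - Y * U) i j)^2 = A.trace + B.trace - 2 * ((Uᵀ * M).trace) := by
    intro U hU
    have hUUt : U * Uᵀ = 1 := mul_eq_one_comm.mp hU
    rw [sumSq_eq_trace]
    have hDt : (X - Y * U)ᵀ = X - Uᵀ * Y := by
      rw [Matrix.transpose_sub, hXt, Matrix.transpose_mul, hYt]
    rw [hDt, Matrix.sub_mul, Matrix.mul_sub, Matrix.mul_sub, Matrix.trace_sub,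
      Matrix.trace_sub, Matrix.trace_sub]
    have e1 : (X * X).trace = A.trace := by rw [hXX]
    have e2 : (X * (Y * U)).trace = (Uᵀ * M).trace := by
      rw [← Matrix.trace_transpose (X * (Y * U)), Matrix.transpose_mul, Matrix.transpose_mul,
        hXt, hYt, hMdef]
      rw [Matrix.mul_assoc]
    have e3 : (Uᵀ * Y * X).trace = (Uᵀ * M).trace := by
      rw [Matrix.mul_assoc, hMdef]
    have e4 : (Uᵀ * Y * (Y * U)).trace = B.trace := by
      rw [Matrix.trace_mul_comm, Matrix.mul_assoc, ← Matrix.mul_assoc U, hUUt,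
        Matrix.one_mul, hYY]
    rw [e1, e2, e3, e4]
    ring
  -- trace bound for arbitrary orthogonal U
  have hbound : ∀ U : Matrix (Fin n) (Fin n) ℝ, Uᵀ * U = 1 →
      (Uᵀ * M).trace ≤ P.trace := by
    intro U hU
    have hUUt : U * Uᵀ = 1 := mul_eq_one_comm.mp hU
    have hV : (U₀ * Uᵀ)ᵀ * (U₀ * Uᵀ) = 1 := by
      rw [Matrix.transpose_mul, Matrix.transpose_transpose, Matrix.mul_assoc,
        ← Matrix.mul_assoc U₀ᵀ, hU₀, Matrix.one_mul, hUUt]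
    have h1 : (Uᵀ * M).trace = ((U₀ * Uᵀ) * P).trace := by
      rw [hMP, ← Matrix.mul_assoc, Matrix.trace_mul_comm, Matrix.mul_assoc]
    rw [h1]
    exact trace_orth_mul_psd_le hV hPpsd
  -- equality at U₀
  have heq : (U₀ᵀ * M).trace = P.trace := by
    rw [hMP, Matrix.trace_mul_comm, Matrix.mul_assoc, hU₀U₀t, Matrix.mul_one]
  -- bwDist content
  have hcontent : (A + B - (2 : ℝ) • (midPosSemidef hA hB).sqrt).trace
      = A.trace + B.trace - 2 * P.trace := by
    rw [← hPsqrt, Matrix.trace_sub, Matrix.trace_add, Matrix.trace_smul, smul_eq_mul]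
  have hU₀sum : ∑ i, ∑ j, ((X - Y * U₀) i j)^2
      = A.trace + B.trace - 2 * P.trace := by
    rw [expand U₀ hU₀, heq]
  have hcnn : 0 ≤ A.trace + B.trace - 2 * P.trace := by
    rw [← hU₀sum]; exact sumSq_nonneg _
  have hfrobeq : frobNorm (X - Y * U₀) = bwDist hA hB := by
    rw [frobNorm, bwDist, hcontent, hU₀sum]
  refine ⟨⟨⟨U₀, hU₀, hfrobeq.symm⟩, ?_⟩, U₀, hU₀, ⟨P, hPpsd, hMP⟩, hfrobeq⟩
  rintro x ⟨U, hU, rfl⟩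
  rw [frobNorm, bwDist, hcontent]
  apply Real.sqrt_le_sqrt
  rw [expand U hU]
  have := hbound U hU
  linarith
end
end

section
/- The Kalman posterior map Ψ(Σ, R) := Σ − Σ Cᵀ(C Σ Cᵀ + R)⁻¹ C Σ is monotone in the Loewner order in both arguments: if Σ₁ ⪯ Σ₂ (both PSD) and R₁ ⪯ R₂ (both positive definite), then Ψ(Σ₁, R₁) ⪯ Ψ(Σ₂, R₂). -/
open Matrix

noncomputable section

/-- Loewner order: `A ⪯ B` iff `B − A` is positive semidefinite. -/
def Loewner {k : ℕ} (A B : Matrix (Fin k) (Fin k) ℝ) : Prop := (B - A).PosSemidef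

/-- Kalman posterior map `Ψ(Σ, R) = Σ − Σ Cᵀ (C Σ Cᵀ + R)⁻¹ C Σ`. -/
def kalmanPost {n m : ℕ} (C : Matrix (Fin m) (Fin n) ℝ)
    (S : Matrix (Fin n) (Fin n) ℝ) (R : Matrix (Fin m) (Fin m) ℝ) :
    Matrix (Fin n) (Fin n) ℝ :=
  S - S * Cᵀ * (C * S * Cᵀ + R)⁻¹ * C * S

lemma pd_add {k : ℕ} {A B : Matrix (Fin k) (Fin k) ℝ} (hA : A.PosSemidef) (hB : B.PosDef) :
    (A + B).PosDef :=
  Matrix.PosDef.posSemidef_add hA hB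

lemma psd_conj {n m : ℕ} {A : Matrix (Fin m) (Fin m) ℝ} (hA : A.PosSemidef)
    (B : Matrix (Fin n) (Fin m) ℝ) : (B * A * Bᵀ).PosSemidef := by
  simpa [Matrix.conjTranspose_eq_transpose_of_trivial] using hA.mul_mul_conjTranspose_same B

/-- Difference between the variational objective and `Ψ(S,R)`. -/
lemma var_sub_eq {n m : ℕ} (C : Matrix (Fin m) (Fin n) ℝ)
    (S : Matrix (Fin n) (Fin n) ℝ) (R : Matrix (Fin m) (Fin m) ℝ)
    (hS : S.PosSemidef) (hR : R.PosDef) (K : Matrix (Fin n) (Fin m) ℝ) :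
    (1 - K * C) * S * (1 - K * C)ᵀ + K * R * Kᵀ - kalmanPost C S R
      = (K - S * Cᵀ * (C * S * Cᵀ + R)⁻¹) * (C * S * Cᵀ + R)
          * (K - S * Cᵀ * (C * S * Cᵀ + R)⁻¹)ᵀ := by
  set M : Matrix (Fin m) (Fin m) ℝ := C * S * Cᵀ + R with hMdef
  have hM : M.PosDef := pd_add (psd_conj hS C) hR
  have hMdet : IsUnit M.det := isUnit_iff_isUnit_det _ |>.1 hM.isUnit
  have hMsym : Mᵀ = M := by
    have := hM.isHermitian
    exact Matrix.IsSymm.eq (by simpa [Matrix.conjTranspose_eq_transpose_of_trivial] using this)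
  have hMisym : M⁻¹ᵀ = M⁻¹ := by
    rw [Matrix.transpose_nonsing_inv, hMsym]
  have hSsym : Sᵀ = S := by
    have := hS.isHermitian
    exact Matrix.IsSymm.eq (by simpa [Matrix.conjTranspose_eq_transpose_of_trivial] using this)
  have hR' : R = M - C * S * Cᵀ := by rw [hMdef, add_sub_cancel_left]
  rw [kalmanPost, ← hMdef, hR']
  simp only [Matrix.transpose_sub, Matrix.transpose_mul, Matrix.transpose_one, hMisym, hSsym,
    Matrix.transpose_transpose]
  simp only [Matrix.mul_sub, Matrix.sub_mul, Matrix.mul_one, Matrix.one_mul,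
    Matrix.mul_assoc, Matrix.mul_nonsing_inv_cancel_left _ _ hMdet,
    Matrix.nonsing_inv_mul_cancel_left _ _ hMdet]
  abel

/-- Variational bound: `Ψ(S,R) ⪯ (I-KC) S (I-KC)ᵀ + K R Kᵀ` for every `K`. -/
lemma kalmanPost_le_var {n m : ℕ} (C : Matrix (Fin m) (Fin n) ℝ)
    (S : Matrix (Fin n) (Fin n) ℝ) (R : Matrix (Fin m) (Fin m) ℝ)
    (hS : S.PosSemidef) (hR : R.PosDef) (K : Matrix (Fin n) (Fin m) ℝ) :
    Loewner (kalmanPost C S R) ((1 - K * C) * S * (1 - K * C)ᵀ + K * R * Kᵀ) := by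
  rw [Loewner, var_sub_eq C S R hS hR K]
  exact psd_conj (pd_add (psd_conj hS C) hR).posSemidef _

/-- Equality at the optimal gain. -/
lemma var_eq_opt {n m : ℕ} (C : Matrix (Fin m) (Fin n) ℝ)
    (S : Matrix (Fin n) (Fin n) ℝ) (R : Matrix (Fin m) (Fin m) ℝ)
    (hS : S.PosSemidef) (hR : R.PosDef) :
    (1 - (S * Cᵀ * (C * S * Cᵀ + R)⁻¹) * C) * S
        * (1 - (S * Cᵀ * (C * S * Cᵀ + R)⁻¹) * C)ᵀ
      + (S * Cᵀ * (C * S * Cᵀ + R)⁻¹) * R * (S * Cᵀ * (C * S * Cᵀ + R)⁻¹)ᵀ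
      = kalmanPost C S R := by
  have h := var_sub_eq C S R hS hR (S * Cᵀ * (C * S * Cᵀ + R)⁻¹)
  rw [sub_self] at h
  simp only [Matrix.zero_mul, Matrix.mul_zero] at h
  exact sub_eq_zero.mp h

/-- The Kalman posterior map is monotone in the Loewner order in both arguments. -/
theorem kalmanPost_monotone {n m : ℕ} (C : Matrix (Fin m) (Fin n) ℝ)
    (S₁ S₂ : Matrix (Fin n) (Fin n) ℝ) (R₁ R₂ : Matrix (Fin m) (Fin m) ℝ)
    (hS₁ : S₁.PosSemidef) (hS₂ : S₂.PosSemidef)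
    (hR₁ : R₁.PosDef) (hR₂ : R₂.PosDef)
    (hS : Loewner S₁ S₂) (hR : Loewner R₁ R₂) :
    Loewner (kalmanPost C S₁ R₁) (kalmanPost C S₂ R₂) := by
  set K : Matrix (Fin n) (Fin m) ℝ := S₂ * Cᵀ * (C * S₂ * Cᵀ + R₂)⁻¹ with hKdef
  have heq := var_eq_opt C S₂ R₂ hS₂ hR₂
  rw [← hKdef] at heq
  have h1 := kalmanPost_le_var C S₁ R₁ hS₁ hR₁ K
  rw [Loewner] at h1 ⊢
  have h2 : kalmanPost C S₂ R₂ - ((1 - K * C) * S₁ * (1 - K * C)ᵀ + K * R₁ * Kᵀ)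
      = (1 - K * C) * (S₂ - S₁) * (1 - K * C)ᵀ + K * (R₂ - R₁) * Kᵀ := by
    rw [← heq]
    simp only [Matrix.mul_sub, Matrix.sub_mul]
    abel
  have h2' : (kalmanPost C S₂ R₂ - ((1 - K * C) * S₁ * (1 - K * C)ᵀ + K * R₁ * Kᵀ)).PosSemidef := by
    rw [h2]
    exact (psd_conj hS _).add (psd_conj hR _)
  have : kalmanPost C S₂ R₂ - kalmanPost C S₁ R₁
      = (kalmanPost C S₂ R₂ - ((1 - K * C) * S₁ * (1 - K * C)ᵀ + K * R₁ * Kᵀ))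
        + ((1 - K * C) * S₁ * (1 - K * C)ᵀ + K * R₁ * Kᵀ - kalmanPost C S₁ R₁) := by
    abel
  rw [this]
  exact h2'.add h1
end
end

section
/- Sandwich property: consider three covariance recursions Σ_{t+1}⁻ = A Ψ(Σ_t⁻, R_t) Aᵀ + Q_t, where Ψ(Σ,R) = Σ − ΣCᵀ(CΣCᵀ+R)⁻¹CΣ, driven respectively by noise covariances (Q_t, R_t) satisfying q̲ I ⪯ Q_t ⪯ q̄ I and r̲ I ⪯ R_t ⪯ r̄ I. If the three recursions are started from initial priors satisfying Σ̲₀⁻ ⪯ Σ₀⁻ ⪯ Σ̄₀⁻, where the lower recursion uses (q̲ I, r̲ I) and the upper uses (q̄ I, r̄ I), then for all t ≥ 0 the middle recursion's prior covariance satisfies Σ̲_t⁻ ⪯ Σ_t⁻ ⪯ Σ̄_t⁻. -/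
open Matrix

noncomputable section

section Aux

variable {n m : ℕ}

lemma dot_symm {k : ℕ} {M : Matrix (Fin k) (Fin k) ℝ} (hM : Mᵀ = M) (a b : Fin k → ℝ) :
    a ⬝ᵥ (M *ᵥ b) = b ⬝ᵥ (M *ᵥ a) := by
  rw [dotProduct_mulVec, ← mulVec_transpose, hM, dotProduct_comm]

lemma dot_transpose {k l : ℕ} (C : Matrix (Fin k) (Fin l) ℝ) (v : Fin k → ℝ) (w : Fin l → ℝ) :
    (Cᵀ *ᵥ v) ⬝ᵥ w = v ⬝ᵥ (C *ᵥ w) := by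
  rw [mulVec_transpose, ← dotProduct_mulVec]

lemma quad_sub {k : ℕ} {M : Matrix (Fin k) (Fin k) ℝ} (hM : Mᵀ = M) (a b : Fin k → ℝ) :
    (a - b) ⬝ᵥ (M *ᵥ (a - b))
      = a ⬝ᵥ (M *ᵥ a) - 2 * (b ⬝ᵥ (M *ᵥ a)) + b ⬝ᵥ (M *ᵥ b) := by
  simp only [mulVec_sub, dotProduct_sub, sub_dotProduct]
  rw [dot_symm hM a b]; ring

lemma herm_t {k : ℕ} {M : Matrix (Fin k) (Fin k) ℝ} (h : M.IsHermitian) : Mᵀ = M := by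
  rw [← Matrix.conjTranspose_eq_transpose_of_trivial]; exact h

lemma smul_one_posDef {k : ℕ} {c : ℝ} (hc : 0 < c) :
    (c • (1 : Matrix (Fin k) (Fin k) ℝ)).PosDef := by
  have h : c • (1 : Matrix (Fin k) (Fin k) ℝ) = Matrix.diagonal (fun _ => c) := by
    ext i j
    by_cases h : i = j <;> simp [Matrix.one_apply, Matrix.diagonal_apply, h]
  rw [h]
  exact Matrix.PosDef.diagonal fun _ => hc

lemma kalman_symm (C : Matrix (Fin m) (Fin n) ℝ)
    {S : Matrix (Fin n) (Fin n) ℝ} {R : Matrix (Fin m) (Fin m) ℝ}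
    (hS : Sᵀ = S) (hR : Rᵀ = R) : (kalmanPost C S R)ᵀ = kalmanPost C S R := by
  have hD : (C * (S * Cᵀ) + R)ᵀ = C * (S * Cᵀ) + R := by
    simp only [Matrix.transpose_add, Matrix.transpose_mul, hS, hR,
      Matrix.transpose_transpose, Matrix.mul_assoc]
  simp only [kalmanPost, Matrix.mul_assoc, Matrix.transpose_sub, Matrix.transpose_mul,
    Matrix.transpose_nonsing_inv, hD, hS, Matrix.transpose_transpose]

lemma kalman_quad (C : Matrix (Fin m) (Fin n) ℝ)
    {S : Matrix (Fin n) (Fin n) ℝ} {R : Matrix (Fin m) (Fin m) ℝ}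
    (hS : Sᵀ = S) (x : Fin n → ℝ) :
    x ⬝ᵥ (kalmanPost C S R *ᵥ x)
      = x ⬝ᵥ (S *ᵥ x)
        - (C *ᵥ (S *ᵥ x)) ⬝ᵥ ((C * S * Cᵀ + R)⁻¹ *ᵥ (C *ᵥ (S *ᵥ x))) := by
  simp only [kalmanPost, Matrix.sub_mulVec, dotProduct_sub, ← Matrix.mulVec_mulVec]
  congr 1
  rw [dot_symm hS, dot_transpose, dotProduct_comm]

/-- Monotonicity of the Kalman posterior map in both arguments. -/
lemma kalmanPost_mono (C : Matrix (Fin m) (Fin n) ℝ)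
    {S₁ S₂ : Matrix (Fin n) (Fin n) ℝ} {R₁ R₂ : Matrix (Fin m) (Fin m) ℝ}
    (hS₁ : S₁.PosSemidef) (hS : (S₂ - S₁).PosSemidef)
    (hR₁ : R₁.PosDef) (hR : (R₂ - R₁).PosSemidef) :
    (kalmanPost C S₂ R₂ - kalmanPost C S₁ R₁).PosSemidef := by
  have hS₂ : S₂.PosSemidef := by
    have h := hS.add hS₁
    rwa [sub_add_cancel] at h
  have hR₂ : R₂.PosDef := by
    have h := hR₁.add_posSemidef hR
    rwa [add_sub_cancel] at h
  have hCt : (Cᴴ : Matrix (Fin n) (Fin m) ℝ) = Cᵀ :=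
    Matrix.conjTranspose_eq_transpose_of_trivial C
  have hD₁ : (C * S₁ * Cᵀ + R₁).PosDef := by
    have h := hS₁.mul_mul_conjTranspose_same C
    rw [hCt] at h
    exact Matrix.PosDef.posSemidef_add h hR₁
  have hD₂ : (C * S₂ * Cᵀ + R₂).PosDef := by
    have h := hS₂.mul_mul_conjTranspose_same C
    rw [hCt] at h
    exact Matrix.PosDef.posSemidef_add h hR₂
  have hS₁t : S₁ᵀ = S₁ := herm_t hS₁.isHermitian
  have hS₂t : S₂ᵀ = S₂ := herm_t hS₂.isHermitian
  have hR₁t : R₁ᵀ = R₁ := herm_t hR₁.isHermitian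
  have hR₂t : R₂ᵀ = R₂ := herm_t hR₂.isHermitian
  have hD₁t : (C * S₁ * Cᵀ + R₁)ᵀ = C * S₁ * Cᵀ + R₁ := herm_t hD₁.isHermitian
  have hΔt : (S₂ - S₁)ᵀ = S₂ - S₁ := by rw [Matrix.transpose_sub, hS₁t, hS₂t]
  have hD₁mul : (C * S₁ * Cᵀ + R₁) * (C * S₁ * Cᵀ + R₁)⁻¹ = 1 :=
    Matrix.mul_nonsing_inv _ ((Matrix.isUnit_iff_isUnit_det _).mp hD₁.isUnit)
  have hD₂mul : (C * S₂ * Cᵀ + R₂) * (C * S₂ * Cᵀ + R₂)⁻¹ = 1 :=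
    Matrix.mul_nonsing_inv _ ((Matrix.isUnit_iff_isUnit_det _).mp hD₂.isUnit)
  refine Matrix.PosSemidef.of_dotProduct_mulVec_nonneg ?_ ?_
  · rw [Matrix.IsHermitian, Matrix.conjTranspose_eq_transpose_of_trivial,
      Matrix.transpose_sub, kalman_symm C hS₂t hR₂t, kalman_symm C hS₁t hR₁t]
  intro x
  rw [star_trivial, Matrix.sub_mulVec, dotProduct_sub,
    kalman_quad C hS₂t x, kalman_quad C hS₁t x]
  have hDv₁ : (C * S₁ * Cᵀ + R₁) *ᵥ ((C * S₁ * Cᵀ + R₁)⁻¹ *ᵥ (C *ᵥ (S₁ *ᵥ x)))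
      = C *ᵥ (S₁ *ᵥ x) := by
    rw [Matrix.mulVec_mulVec, hD₁mul, Matrix.one_mulVec]
  have hDv₂ : (C * S₂ * Cᵀ + R₂) *ᵥ ((C * S₂ * Cᵀ + R₂)⁻¹ *ᵥ (C *ᵥ (S₂ *ᵥ x)))
      = C *ᵥ (S₂ *ᵥ x) := by
    rw [Matrix.mulVec_mulVec, hD₂mul, Matrix.one_mulVec]
  set u₁ : Fin m → ℝ := C *ᵥ (S₁ *ᵥ x) with hu₁
  set u₂ : Fin m → ℝ := C *ᵥ (S₂ *ᵥ x) with hu₂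
  set v₁ : Fin m → ℝ := (C * S₁ * Cᵀ + R₁)⁻¹ *ᵥ u₁ with hv₁
  set v₂ : Fin m → ℝ := (C * S₂ * Cᵀ + R₂)⁻¹ *ᵥ u₂ with hv₂
  have ht1 : 0 ≤ (x - Cᵀ *ᵥ v₂) ⬝ᵥ ((S₂ - S₁) *ᵥ (x - Cᵀ *ᵥ v₂)) := by
    simpa using hS.dotProduct_mulVec_nonneg (x - Cᵀ *ᵥ v₂)
  have ht2 : 0 ≤ v₂ ⬝ᵥ ((R₂ - R₁) *ᵥ v₂) := by simpa using hR.dotProduct_mulVec_nonneg v₂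
  have ht3 : 0 ≤ (v₁ - v₂) ⬝ᵥ ((C * S₁ * Cᵀ + R₁) *ᵥ (v₁ - v₂)) := by
    simpa using hD₁.posSemidef.dotProduct_mulVec_nonneg (v₁ - v₂)
  have f1 : (x - Cᵀ *ᵥ v₂) ⬝ᵥ ((S₂ - S₁) *ᵥ (x - Cᵀ *ᵥ v₂))
      = x ⬝ᵥ (S₂ *ᵥ x) - x ⬝ᵥ (S₁ *ᵥ x)
        - 2 * (v₂ ⬝ᵥ u₂) + 2 * (v₂ ⬝ᵥ u₁)
        + v₂ ⬝ᵥ (C *ᵥ (S₂ *ᵥ (Cᵀ *ᵥ v₂))) - v₂ ⬝ᵥ (C *ᵥ (S₁ *ᵥ (Cᵀ *ᵥ v₂))) := by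
    rw [quad_sub hΔt x (Cᵀ *ᵥ v₂)]
    simp only [Matrix.sub_mulVec, Matrix.mulVec_sub, dotProduct_sub, dot_transpose,
      hu₁, hu₂]
    ring
  have f2 : v₂ ⬝ᵥ ((R₂ - R₁) *ᵥ v₂) = v₂ ⬝ᵥ (R₂ *ᵥ v₂) - v₂ ⬝ᵥ (R₁ *ᵥ v₂) := by
    simp only [Matrix.sub_mulVec, dotProduct_sub]
  have f3 : (v₁ - v₂) ⬝ᵥ ((C * S₁ * Cᵀ + R₁) *ᵥ (v₁ - v₂))
      = v₁ ⬝ᵥ u₁ - 2 * (v₂ ⬝ᵥ u₁)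
        + v₂ ⬝ᵥ (C *ᵥ (S₁ *ᵥ (Cᵀ *ᵥ v₂))) + v₂ ⬝ᵥ (R₁ *ᵥ v₂) := by
    rw [quad_sub hD₁t v₁ v₂, hDv₁]
    simp only [Matrix.add_mulVec, dotProduct_add, ← Matrix.mulVec_mulVec]
    ring
  have f4 : v₂ ⬝ᵥ u₂ = v₂ ⬝ᵥ (C *ᵥ (S₂ *ᵥ (Cᵀ *ᵥ v₂))) + v₂ ⬝ᵥ (R₂ *ᵥ v₂) := by
    conv_lhs => rw [← hDv₂]
    simp only [Matrix.add_mulVec, dotProduct_add, ← Matrix.mulVec_mulVec]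
  have f5 : u₂ ⬝ᵥ v₂ = v₂ ⬝ᵥ u₂ := dotProduct_comm _ _
  have f6 : u₁ ⬝ᵥ v₁ = v₁ ⬝ᵥ u₁ := dotProduct_comm _ _
  linarith [ht1, ht2, ht3, f1, f2, f3, f4, f5, f6]

/-- The Kalman posterior map preserves positive semidefiniteness. -/
lemma kalmanPost_posSemidef (C : Matrix (Fin m) (Fin n) ℝ)
    {S : Matrix (Fin n) (Fin n) ℝ} {R : Matrix (Fin m) (Fin m) ℝ}
    (hS : S.PosSemidef) (hR : R.PosDef) : (kalmanPost C S R).PosSemidef := by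
  have h0 : ((0 : Matrix (Fin n) (Fin n) ℝ)).PosSemidef := Matrix.PosSemidef.zero
  have hS' : (S - 0).PosSemidef := by rwa [sub_zero]
  have hR' : ((R - R)).PosSemidef := by rw [sub_self]; exact Matrix.PosSemidef.zero
  have h := kalmanPost_mono C h0 hS' hR hR'
  have hz : kalmanPost C (0 : Matrix (Fin n) (Fin n) ℝ) R = 0 := by
    simp [kalmanPost]
  rwa [hz, sub_zero] at h

/-- Monotonicity of the prediction step. -/
lemma step_mono (A : Matrix (Fin n) (Fin n) ℝ)
    {P₁ P₂ Q₁ Q₂ : Matrix (Fin n) (Fin n) ℝ}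
    (hP : (P₂ - P₁).PosSemidef) (hQ : (Q₂ - Q₁).PosSemidef) :
    ((A * P₂ * Aᵀ + Q₂) - (A * P₁ * Aᵀ + Q₁)).PosSemidef := by
  have h := hP.mul_mul_conjTranspose_same A
  rw [Matrix.conjTranspose_eq_transpose_of_trivial] at h
  have h2 := h.add hQ
  have hEq : A * (P₂ - P₁) * Aᵀ + (Q₂ - Q₁)
      = (A * P₂ * Aᵀ + Q₂) - (A * P₁ * Aᵀ + Q₁) := by
    noncomm_ring
  rwa [hEq] at h2

end Aux

/-- Sandwich property for the Riccati recursion `Σ_{t+1}⁻ = A Ψ(Σ_t⁻, R_t) Aᵀ + Q_t`: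
if the noise covariances satisfy `q̲I ⪯ Q_t ⪯ q̄I`, `r̲I ⪯ R_t ⪯ r̄I`, and the lower/upper
recursions are driven by `(q̲I, r̲I)` and `(q̄I, r̄I)` respectively, then the middle
recursion stays sandwiched between the two for all times. -/
theorem riccati_sandwich {n m : ℕ} (A : Matrix (Fin n) (Fin n) ℝ)
    (C : Matrix (Fin m) (Fin n) ℝ)
    (ql qh rl rh : ℝ) (hql : 0 < ql) (hqh : 0 < qh) (hrl : 0 < rl) (hrh : 0 < rh)
    (hq : ql ≤ qh) (hr : rl ≤ rh)
    (Q : ℕ → Matrix (Fin n) (Fin n) ℝ) (R : ℕ → Matrix (Fin m) (Fin m) ℝ)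
    (hQpsd : ∀ t, (Q t).PosSemidef) (hRpd : ∀ t, (R t).PosDef)
    (hQl : ∀ t, Loewner (ql • (1 : Matrix (Fin n) (Fin n) ℝ)) (Q t))
    (hQh : ∀ t, Loewner (Q t) (qh • (1 : Matrix (Fin n) (Fin n) ℝ)))
    (hRl : ∀ t, Loewner (rl • (1 : Matrix (Fin m) (Fin m) ℝ)) (R t))
    (hRh : ∀ t, Loewner (R t) (rh • (1 : Matrix (Fin m) (Fin m) ℝ)))
    (Slow S Shigh : ℕ → Matrix (Fin n) (Fin n) ℝ)
    (hlow : ∀ t, Slow (t + 1) =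
      A * kalmanPost C (Slow t) (rl • (1 : Matrix (Fin m) (Fin m) ℝ)) * Aᵀ
        + ql • (1 : Matrix (Fin n) (Fin n) ℝ))
    (hmid : ∀ t, S (t + 1) = A * kalmanPost C (S t) (R t) * Aᵀ + Q t)
    (hhigh : ∀ t, Shigh (t + 1) =
      A * kalmanPost C (Shigh t) (rh • (1 : Matrix (Fin m) (Fin m) ℝ)) * Aᵀ
        + qh • (1 : Matrix (Fin n) (Fin n) ℝ))
    (h0psd : (Slow 0).PosSemidef)
    (h0l : Loewner (Slow 0) (S 0)) (h0h : Loewner (S 0) (Shigh 0)) :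
    ∀ t, Loewner (Slow t) (S t) ∧ Loewner (S t) (Shigh t) := by
  have hrlI : ((rl • (1 : Matrix (Fin m) (Fin m) ℝ))).PosDef := smul_one_posDef hrl
  have main : ∀ t, (Slow t).PosSemidef ∧ Loewner (Slow t) (S t) ∧ Loewner (S t) (Shigh t) := by
    intro t
    induction t with
    | zero => exact ⟨h0psd, h0l, h0h⟩
    | succ t ih =>
      obtain ⟨hps, hl, hh⟩ := ih
      have hSpsd : (S t).PosSemidef := by
        have h := hl.add hps
        rwa [sub_add_cancel] at h
      -- lower comparison
      have hmono₁ := kalmanPost_mono C hps hl hrlI (hRl t)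
      have hmono₂ := kalmanPost_mono C hSpsd hh (hRpd t) (hRh t)
      refine ⟨?_, ?_, ?_⟩
      · rw [hlow t]
        have hk : (kalmanPost C (Slow t) (rl • (1 :
            Matrix (Fin m) (Fin m) ℝ))).PosSemidef :=
          kalmanPost_posSemidef C hps hrlI
        have h1 := hk.mul_mul_conjTranspose_same A
        rw [Matrix.conjTranspose_eq_transpose_of_trivial] at h1
        exact h1.add (smul_one_posDef hql).posSemidef
      · rw [hlow t, hmid t]
        exact step_mono A hmono₁ (hQl t)
      · rw [hmid t, hhigh t]
        exact step_mono A hmono₂ (hQh t)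
  exact fun t => ⟨(main t).2.1, (main t).2.2⟩
end
end

section
/- Let K = Σ⁻Cᵀ(CΣ⁻Cᵀ + R)⁻¹ be the Kalman gain for a prior covariance Σ⁻ that satisfies the steady-state relation Σ⁻ = A Σ Aᵀ + Q with posterior Σ = (I − KC)Σ⁻, where Q, R are positive definite. Then with F := (I − KC)A, the posterior covariance satisfies the Lyapunov-type identity Σ = F Σ Fᵀ + (I − KC) Q (I − KC)ᵀ + K R Kᵀ, and consequently F is Schur stable. -/
open Matrix

noncomputable section

set_option maxHeartbeats 1000000

/-- Schur stability of a real matrix: all (complex) eigenvalues have modulus `< 1`. -/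
def SchurStable {n : ℕ} (F : Matrix (Fin n) (Fin n) ℝ) : Prop :=
  ∀ μ ∈ spectrum ℂ (F.map (algebraMap ℝ ℂ)), ‖μ‖ < 1

/-- Real part of the complexified quadratic form. -/
lemma re_dot_complexify {n : ℕ} (M : Matrix (Fin n) (Fin n) ℝ) (x : Fin n → ℂ) :
    (star x ⬝ᵥ (M.map (algebraMap ℝ ℂ)) *ᵥ x).re
      = ((fun i => (x i).re) ⬝ᵥ M *ᵥ (fun i => (x i).re))
        + ((fun i => (x i).im) ⬝ᵥ M *ᵥ (fun i => (x i).im)) := by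
  simp only [dotProduct, mulVec, Matrix.map_apply, Pi.star_apply, Complex.re_sum,
    Finset.mul_sum, Complex.mul_re, Complex.mul_im,
    Complex.coe_algebraMap, Complex.ofReal_re, Complex.ofReal_im]
  rw [← Finset.sum_add_distrib]
  refine Finset.sum_congr rfl fun i _ => ?_
  rw [← Finset.sum_add_distrib]
  refine Finset.sum_congr rfl fun j _ => ?_
  simp only [RCLike.star_def, Complex.conj_re, Complex.conj_im]
  ring

lemma posdef_complexify {n : ℕ} {M : Matrix (Fin n) (Fin n) ℝ} (hM : M.PosDef)
    {x : Fin n → ℂ} (hx : x ≠ 0) :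
    0 < (star x ⬝ᵥ (M.map (algebraMap ℝ ℂ)) *ᵥ x).re := by
  rw [re_dot_complexify]
  set a : Fin n → ℝ := fun i => (x i).re with ha
  set b : Fin n → ℝ := fun i => (x i).im with hb
  have hab : a ≠ 0 ∨ b ≠ 0 := by
    by_contra h
    push_neg at h
    apply hx
    funext i
    have h1 := congrFun h.1 i
    have h2 := congrFun h.2 i
    simp only [ha, hb, Pi.zero_apply] at h1 h2
    exact Complex.ext h1 h2
  have hsd := hM.posSemidef
  rcases hab with h | h
  · have h1 := hM.dotProduct_mulVec_pos h
    have h2 := hsd.dotProduct_mulVec_nonneg b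
    simp only [star_trivial] at h1 h2
    linarith
  · have h1 := hsd.dotProduct_mulVec_nonneg a
    have h2 := hM.dotProduct_mulVec_pos h
    simp only [star_trivial] at h1 h2
    linarith

lemma dot_sandwich {n m : ℕ} (B : Matrix (Fin n) (Fin m) ℝ) (Q : Matrix (Fin m) (Fin m) ℝ)
    (x : Fin n → ℝ) :
    x ⬝ᵥ ((B * Q * Bᵀ) *ᵥ x) = (Bᵀ *ᵥ x) ⬝ᵥ (Q *ᵥ (Bᵀ *ᵥ x)) := by
  rw [Matrix.mul_assoc, ← mulVec_mulVec, ← mulVec_mulVec, dotProduct_mulVec,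
    ← mulVec_transpose]

lemma conjTranspose_complexify {n m : ℕ} (M : Matrix (Fin n) (Fin m) ℝ) :
    (M.map (algebraMap ℝ ℂ))ᴴ = Mᵀ.map (algebraMap ℝ ℂ) := by
  ext i j
  simp [conjTranspose_apply, Complex.conj_ofReal]

/-- Steady-state Kalman filter stability: with the optimal gain
`K = Σ⁻Cᵀ(CΣ⁻Cᵀ + R)⁻¹`, the steady-state relations `Σ⁻ = AΣAᵀ + Q`,
`Σ = (I − KC)Σ⁻` imply the Lyapunov-type identity
`Σ = FΣFᵀ + (I−KC)Q(I−KC)ᵀ + KRKᵀ` with `F = (I − KC)A`,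
and consequently `F` is Schur stable. -/
theorem steady_state_kalman_schur_stable {n m : ℕ}
    (A : Matrix (Fin n) (Fin n) ℝ) (C : Matrix (Fin m) (Fin n) ℝ)
    (Q : Matrix (Fin n) (Fin n) ℝ) (R : Matrix (Fin m) (Fin m) ℝ)
    (hQ : Q.PosDef) (hR : R.PosDef)
    (Sprior Spost : Matrix (Fin n) (Fin n) ℝ)
    (hprior : Sprior.PosDef) (hpost : Spost.PosDef)
    (K : Matrix (Fin n) (Fin m) ℝ)
    (hK : K = Sprior * Cᵀ * (C * Sprior * Cᵀ + R)⁻¹)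
    (hss : Sprior = A * Spost * Aᵀ + Q)
    (hup : Spost = (1 - K * C) * Sprior) :
    Spost = ((1 - K * C) * A) * Spost * ((1 - K * C) * A)ᵀ
        + (1 - K * C) * Q * (1 - K * C)ᵀ + K * R * Kᵀ ∧
    SchurStable ((1 - K * C) * A) := by
  have hCT : Cᴴ = Cᵀ := conjTranspose_eq_transpose_of_trivial C
  have hS : (C * Sprior * Cᵀ + R).PosDef := by
    have h1 : (C * Sprior * Cᵀ).PosSemidef := by
      have := hprior.posSemidef.mul_mul_conjTranspose_same C
      rwa [hCT] at this
    exact Matrix.PosDef.posSemidef_add h1 hR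
  have hSu : IsUnit (C * Sprior * Cᵀ + R).det := hS.det_pos.ne'.isUnit
  have hKS : K * (C * Sprior * Cᵀ + R) = Sprior * Cᵀ := by
    rw [hK, Matrix.mul_assoc, nonsing_inv_mul _ hSu, Matrix.mul_one]
  have hKS2 : K * (C * (Sprior * (Cᵀ * Kᵀ))) + K * (R * Kᵀ) = Sprior * (Cᵀ * Kᵀ) := by
    have h := congrArg (fun M => M * Kᵀ) hKS
    simp only [Matrix.add_mul, Matrix.mul_add, Matrix.mul_assoc] at h
    exact h
  -- Joseph form
  have hJoseph : (1 - K * C) * Sprior * (1 - K * C)ᵀ + K * R * Kᵀ = Spost := by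
    have ht : (1 - K * C)ᵀ = 1 - Cᵀ * Kᵀ := by
      rw [transpose_sub, transpose_one, transpose_mul]
    rw [ht, hup]
    calc (1 - K * C) * Sprior * (1 - Cᵀ * Kᵀ) + K * R * Kᵀ
        = (1 - K * C) * Sprior - Sprior * (Cᵀ * Kᵀ)
            + (K * (C * (Sprior * (Cᵀ * Kᵀ))) + K * (R * Kᵀ)) := by
          simp only [Matrix.mul_sub, Matrix.sub_mul, Matrix.mul_one, Matrix.one_mul,
            Matrix.mul_assoc]
          abel
      _ = (1 - K * C) * Sprior := by rw [hKS2]; abel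
  have hmain : Spost = ((1 - K * C) * A) * Spost * ((1 - K * C) * A)ᵀ
      + (1 - K * C) * Q * (1 - K * C)ᵀ + K * R * Kᵀ := by
    conv_lhs => rw [← hJoseph, hss]
    rw [transpose_mul]
    simp only [Matrix.mul_add, Matrix.add_mul, Matrix.mul_assoc]
  refine ⟨hmain, ?_⟩
  -- W is positive definite
  set W : Matrix (Fin n) (Fin n) ℝ := (1 - K * C) * Q * (1 - K * C)ᵀ + K * R * Kᵀ with hW
  have hBt : (1 - K * C)ᴴ = (1 - K * C)ᵀ := conjTranspose_eq_transpose_of_trivial _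
  have hKt : Kᴴ = Kᵀ := conjTranspose_eq_transpose_of_trivial K
  have hWpos : W.PosDef := by
    refine Matrix.PosDef.of_dotProduct_mulVec_pos ?_ ?_
    · have h1 := (hQ.posSemidef.mul_mul_conjTranspose_same (1 - K * C)).isHermitian
      have h2 := (hR.posSemidef.mul_mul_conjTranspose_same K).isHermitian
      rw [hBt] at h1
      rw [hKt] at h2
      exact (h1.add h2)
    · intro x hx
      have hx' : star x = x := star_trivial x
      rw [hW, add_mulVec, dotProduct_add, hx', dot_sandwich, dot_sandwich]
      set u := (1 - K * C)ᵀ *ᵥ x with hu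
      set w := Kᵀ *ᵥ x with hwv
      have hxuw : u = x - Cᵀ *ᵥ w := by
        rw [hu, hwv, transpose_sub, transpose_one, transpose_mul, sub_mulVec, one_mulVec,
          mulVec_mulVec]
      by_cases hu0 : u = 0
      · have hw0 : w ≠ 0 := by
          intro h
          apply hx
          have h3 := hxuw
          rw [hu0, h, mulVec_zero, sub_zero] at h3
          exact h3.symm
        have h2 := hR.dotProduct_mulVec_pos hw0
        rw [star_trivial] at h2
        have h1 : u ⬝ᵥ (Q *ᵥ u) = 0 := by rw [hu0]; simp
        linarith
      · have h1 := hQ.dotProduct_mulVec_pos hu0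
        rw [star_trivial] at h1
        have h2 := hR.posSemidef.dotProduct_mulVec_nonneg w
        rw [star_trivial] at h2
        linarith
  -- Schur stability
  intro μ hμ
  set F : Matrix (Fin n) (Fin n) ℝ := (1 - K * C) * A with hF
  set Fc : Matrix (Fin n) (Fin n) ℂ := F.map (algebraMap ℝ ℂ) with hFc
  have hdet : (algebraMap ℂ (Matrix (Fin n) (Fin n) ℂ) μ - Fc).det = 0 := by
    have hsp := spectrum.mem_iff.mp hμ
    by_contra h
    exact hsp ((Matrix.isUnit_iff_isUnit_det _).mpr (isUnit_iff_ne_zero.mpr h))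
  have hdetH : ((starRingEnd ℂ) μ • (1 : Matrix (Fin n) (Fin n) ℂ) - Fcᴴ).det = 0 := by
    have heq : ((starRingEnd ℂ) μ • (1 : Matrix (Fin n) (Fin n) ℂ) - Fcᴴ)
        = (algebraMap ℂ (Matrix (Fin n) (Fin n) ℂ) μ - Fc)ᴴ := by
      rw [conjTranspose_sub, Algebra.algebraMap_eq_smul_one, conjTranspose_smul,
        conjTranspose_one]
      rfl
    rw [heq, det_conjTranspose, hdet, star_zero]
  obtain ⟨v, hv0, hv⟩ := (Matrix.exists_mulVec_eq_zero_iff).mpr hdetH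
  have hveig : Fcᴴ *ᵥ v = (starRingEnd ℂ) μ • v := by
    rw [sub_mulVec, smul_mulVec, one_mulVec] at hv
    exact (sub_eq_zero.mp hv).symm
  -- complexified Lyapunov identity
  set Sc : Matrix (Fin n) (Fin n) ℂ := Spost.map (algebraMap ℝ ℂ) with hSc
  set Wc : Matrix (Fin n) (Fin n) ℂ := W.map (algebraMap ℝ ℂ) with hWc
  have hmainC : Sc = Fc * Sc * Fcᴴ + Wc := by
    rw [hFc, hSc, hWc, conjTranspose_complexify, ← Matrix.map_mul, ← Matrix.map_mul,
      ← Matrix.map_add, hW]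
    conv_lhs => rw [hmain]
    rw [add_assoc]
    exact fun a₁ a₂ => map_add (algebraMap ℝ ℂ) a₁ a₂
  have hvv : star v ⬝ᵥ (Sc *ᵥ v)
      = μ * ((starRingEnd ℂ) μ) * (star v ⬝ᵥ (Sc *ᵥ v)) + star v ⬝ᵥ (Wc *ᵥ v) := by
    conv_lhs => rw [hmainC]
    rw [add_mulVec, dotProduct_add]
    congr 1
    have hsv : star v ᵥ* Fc = μ • star v := by
      have h := star_mulVec Fcᴴ v
      rw [conjTranspose_conjTranspose] at h
      rw [← h, hveig, star_smul]
      simp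
    rw [Matrix.mul_assoc, ← mulVec_mulVec, dotProduct_mulVec, hsv, ← mulVec_mulVec, hveig,
      mulVec_smul, smul_dotProduct, dotProduct_smul, smul_eq_mul, smul_eq_mul]
    ring
  have hd := posdef_complexify hpost hv0
  have hw := posdef_complexify hWpos hv0
  rw [← hSc] at hd
  rw [← hWc] at hw
  have hre := congrArg Complex.re hvv
  rw [Complex.add_re] at hre
  have hmu : μ * (starRingEnd ℂ) μ = (Complex.normSq μ : ℂ) := Complex.mul_conj μ
  rw [hmu, Complex.re_ofReal_mul] at hre
  have hlt : Complex.normSq μ < 1 := by nlinarith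
  nlinarith [Complex.sq_norm μ, norm_nonneg μ]

end
end
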